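/- arXiv:2412.04778 — 5 statements merged into one kernel-verified Lean document; each statement's English description precedes it below -/
import Mathlib

section
/- Let c > 0, α > 0, τ > 0, and let k : ℝ → ℝ be differentiable on [0, ∞) with τ k′(t) = k(t) c² − α k(t)³ for all t ≥ 0. If k(0) > 0 then k(t) → c/√α as t → ∞, and if k(0) < 0 then k(t) → −c/√α as t → ∞. -/
/-!
Writing `D(t) = α k(0)² + (c² − α k(0)²) e^{−2c²t/τ}` (the Bernoulli substitution `1/k²` turns
the flow into a linear equation, whose solution is `D / (c² k(0)²)`), the defect
`h = k² D − c² k(0)²` satisfies `h' = −(2α k²/τ) h`, so `h²` is nonincreasing and `h ≡ 0`.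
Since `D > 0`, the continuous function `k` never vanishes and hence equals `c k(0) / √D` on
`[0, ∞)`, not just up to sign. As `D → α k(0)²`, `k` tends to `c k(0) / (√α |k(0)|)`.
-/

open Filter Set Real Topology

lemma eq_zero_of_hasDerivAt_of_mul_deriv_nonpos {f f' : ℝ → ℝ} {a : ℝ}
    (hf : ∀ t, a ≤ t → HasDerivAt f (f' t) t) (hmul : ∀ t, a < t → f t * f' t ≤ 0)
    (ha : f a = 0) {t : ℝ} (ht : a ≤ t) : f t = 0 := by
  have hanti : AntitoneOn (fun s => f s ^ 2) (Ici a) := by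
    refine antitoneOn_of_hasDerivWithinAt_nonpos (convex_Ici a)
      (fun s hs => ((hf s hs).continuousAt.pow 2).continuousWithinAt)
      (fun s hs => ((hf s (mem_Ici.mp (interior_subset hs))).fun_pow 2).hasDerivWithinAt)
      (fun s hs => ?_)
    rw [interior_Ici] at hs
    push_cast
    nlinarith [hmul s hs]
  have : f t ^ 2 ≤ f a ^ 2 := hanti self_mem_Ici ht ht
  rw [ha] at this
  simpa using this

noncomputable def cubicFlowDenom (c α τ k₀ t : ℝ) : ℝ :=
  α * k₀ ^ 2 + (c ^ 2 - α * k₀ ^ 2) * exp (-(2 * c ^ 2 / τ) * t)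

noncomputable def cubicFlowSol (c α τ k₀ t : ℝ) : ℝ :=
  c * k₀ / √(cubicFlowDenom c α τ k₀ t)

lemma hasDerivAt_cubicFlowDenom (c α τ k₀ t : ℝ) :
    HasDerivAt (cubicFlowDenom c α τ k₀)
      (-(2 * c ^ 2 / τ) * (cubicFlowDenom c α τ k₀ t - α * k₀ ^ 2)) t := by
  have := (((hasDerivAt_id' t).const_mul (-(2 * c ^ 2 / τ))).exp.const_mul
    (c ^ 2 - α * k₀ ^ 2)).const_add (α * k₀ ^ 2)
  refine this.congr_deriv ?_
  unfold cubicFlowDenom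
  ring

lemma continuous_cubicFlowDenom (c α τ k₀ : ℝ) : Continuous (cubicFlowDenom c α τ k₀) :=
  continuous_iff_continuousAt.mpr fun t => (hasDerivAt_cubicFlowDenom c α τ k₀ t).continuousAt

lemma cubicFlowDenom_zero (c α τ k₀ : ℝ) : cubicFlowDenom c α τ k₀ 0 = c ^ 2 := by
  simp [cubicFlowDenom]

lemma cubicFlowDenom_pos {c α τ : ℝ} (k₀ : ℝ) (hc : c ≠ 0) (hα : 0 ≤ α) (hτ : 0 ≤ τ) {t : ℝ}
    (ht : 0 ≤ t) : 0 < cubicFlowDenom c α τ k₀ t := by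
  have hE : exp (-(2 * c ^ 2 / τ) * t) ≤ 1 :=
    exp_le_one_iff.mpr (mul_nonpos_of_nonpos_of_nonneg (neg_nonpos.mpr (by positivity)) ht)
  have hE' := exp_pos (-(2 * c ^ 2 / τ) * t)
  have hc2 : 0 < c ^ 2 := by positivity
  have hαk : 0 ≤ α * k₀ ^ 2 := by positivity
  unfold cubicFlowDenom
  nlinarith

lemma tendsto_cubicFlowDenom {c α τ : ℝ} (k₀ : ℝ) (hc : c ≠ 0) (hτ : 0 < τ) :
    Tendsto (cubicFlowDenom c α τ k₀) atTop (𝓝 (α * k₀ ^ 2)) := by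
  have hexp : Tendsto (fun t => exp (-(2 * c ^ 2 / τ) * t)) atTop (𝓝 0) :=
    tendsto_exp_atBot.comp <| tendsto_id.const_mul_atTop_of_neg (by
      have : 0 < 2 * c ^ 2 / τ := by positivity
      linarith)
  have := (hexp.const_mul (c ^ 2 - α * k₀ ^ 2)).const_add (α * k₀ ^ 2)
  rwa [mul_zero, add_zero] at this

section CubicFlow

variable {c α τ : ℝ} {k k' : ℝ → ℝ}
  (hderiv : ∀ t, 0 ≤ t → HasDerivAt k (k' t) t)
  (hode : ∀ t, 0 ≤ t → τ * k' t = k t * c ^ 2 - α * k t ^ 3)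
include hderiv hode

lemma sq_mul_cubicFlowDenom_eq (hα : 0 ≤ α) (hτ : 0 < τ) {t : ℝ} (ht : 0 ≤ t) :
    k t ^ 2 * cubicFlowDenom c α τ (k 0) t = c ^ 2 * k 0 ^ 2 := by
  set h := fun s => k s ^ 2 * cubicFlowDenom c α τ (k 0) s - c ^ 2 * k 0 ^ 2 with h_def
  have hh : ∀ s, 0 ≤ s → HasDerivAt h (-(2 * α * k s ^ 2 / τ) * h s) s := by
    intro s hs
    have := (((hderiv s hs).fun_pow 2).mul (hasDerivAt_cubicFlowDenom c α τ (k 0) s)).sub_const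
      (c ^ 2 * k 0 ^ 2)
    refine this.congr_deriv ?_
    have hk' : k' s = (k s * c ^ 2 - α * k s ^ 3) / τ := by
      rw [eq_div_iff hτ.ne', mul_comm, hode s hs]
    rw [hk', h_def]
    field_simp
    ring
  have hh0 : h 0 = 0 := by simp only [h, cubicFlowDenom_zero]; ring
  have := eq_zero_of_hasDerivAt_of_mul_deriv_nonpos hh (fun s _ => ?_) hh0 ht
  · simp only [h] at this
    linarith
  · have : 0 ≤ 2 * α * k s ^ 2 / τ * h s ^ 2 := by positivity
    linarith

lemma eqOn_cubicFlowSol (hc : 0 < c) (hα : 0 ≤ α) (hτ : 0 < τ) (hk₀ : k 0 ≠ 0) :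
    EqOn k (cubicFlowSol c α τ (k 0)) (Ici 0) := by
  have hD : ∀ t ∈ Ici (0 : ℝ), 0 < cubicFlowDenom c α τ (k 0) t :=
    fun t ht => cubicFlowDenom_pos _ hc.ne' hα hτ.le ht
  refine isPreconnected_Ici.eq_of_sq_eq
    (fun t ht => (hderiv t ht).continuousAt.continuousWithinAt)
    (continuousOn_const.div (continuous_cubicFlowDenom c α τ (k 0)).continuousOn.sqrt
      fun t ht => (sqrt_pos.2 (hD t ht)).ne')
    (fun t ht => ?_) (fun ht => ?_) self_mem_Ici ?_
  · simp only [Pi.pow_apply, cubicFlowSol, div_pow, sq_sqrt (hD t ht).le]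
    rw [eq_div_iff (hD t ht).ne', sq_mul_cubicFlowDenom_eq hderiv hode hα hτ ht, mul_pow]
  · exact div_ne_zero (mul_ne_zero hc.ne' hk₀) (sqrt_pos.2 (hD _ ht)).ne'
  · rw [cubicFlowSol, cubicFlowDenom_zero, sqrt_sq hc.le, mul_div_cancel_left₀ _ hc.ne']

lemma tendsto_of_cubic_ode (hc : 0 < c) (hα : 0 < α) (hτ : 0 < τ) (hk₀ : k 0 ≠ 0) :
    Tendsto k atTop (𝓝 (c * k 0 / √(α * k 0 ^ 2))) := by
  have hsol : Tendsto (cubicFlowSol c α τ (k 0)) atTop (𝓝 (c * k 0 / √(α * k 0 ^ 2))) :=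
    tendsto_const_nhds.div (tendsto_cubicFlowDenom (k 0) hc.ne' hτ).sqrt
      (sqrt_pos.2 (by positivity)).ne'
  refine hsol.congr' ?_
  filter_upwards [eventually_ge_atTop 0] with t ht
  exact (eqOn_cubicFlowSol hderiv hode hc hα.le hτ hk₀ ht).symm

end CubicFlow

/-- Convergence of the scalar overlap dynamics `τ dk/dt = k c² − α k³` from the proof of
Theorem 1 of the paper: the sign of the initial condition `k(0)` selects which of the two
stable fixed points `±c/√α` the solution converges to. -/
theorem stmt_5 (c α τ : ℝ) (hc : 0 < c) (hα : 0 < α) (hτ : 0 < τ)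
    (k k' : ℝ → ℝ)
    (hderiv : ∀ t : ℝ, 0 ≤ t → HasDerivAt k (k' t) t)
    (hode : ∀ t : ℝ, 0 ≤ t → τ * k' t = k t * c ^ 2 - α * k t ^ 3) :
    (0 < k 0 → Filter.Tendsto k Filter.atTop (nhds (c / Real.sqrt α))) ∧
      (k 0 < 0 → Filter.Tendsto k Filter.atTop (nhds (-(c / Real.sqrt α)))) := by
  have hlim := fun hk₀ => tendsto_of_cubic_ode hderiv hode hc hα hτ hk₀
  have hsqrt : √(α * k 0 ^ 2) = √α * |k 0| := by rw [sqrt_mul hα.le, sqrt_sq_eq_abs]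
  refine ⟨fun hk₀ => ?_, fun hk₀ => ?_⟩
  · convert hlim hk₀.ne' using 2
    rw [hsqrt, abs_of_pos hk₀, mul_div_mul_right _ _ hk₀.ne']
  · convert hlim hk₀.ne using 2
    rw [hsqrt, abs_of_neg hk₀, mul_neg, div_neg, mul_div_mul_right _ _ hk₀.ne]
end

section
/- Let d ≥ 1, let y ∈ ℝ^d, let λ ∈ ℝ and a₀ ∈ ℝ, and define the sequence ỹ : ℕ → ℝ^d by ỹ₀ = a₀ • y and ỹ_{i+1} = (1 − λ k_i²) • ỹ_i + (λ k_i) • y, where k_i := ⟨y, ỹ_i⟩. Define the scalar sequence a : ℕ → ℝ by a₍₀₎ = a₀ and a_{i+1} = a_i + λ ‖y‖² a_i (1 − ‖y‖² a_i²). Then for every i, ỹ_i = a_i • y (in particular every iterate is a scalar multiple of y) and k_i = a_i ‖y‖². -/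
open scoped RealInnerProductSpace

/-- The Euler discretization `ỹ_{i+1} = (1 − λ k_i²) ỹ_i + λ k_i y` with
`k_i = ⟪y, ỹ_i⟫` (Eq. (4) of the paper) keeps all iterates parallel to `y` and reduces
to the scalar recursion `a_{i+1} = a_i + λ ‖y‖² a_i (1 − ‖y‖² a_i²)` (Eq. (5)),
with `k_i = a_i ‖y‖²`. -/
theorem stmt_7 (d : ℕ) (hd : 1 ≤ d) (y : EuclideanSpace ℝ (Fin d))
    (lam a₀ : ℝ) (ytil : ℕ → EuclideanSpace ℝ (Fin d)) (a : ℕ → ℝ)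
    (hy0 : ytil 0 = a₀ • y)
    (hyrec : ∀ i : ℕ, ytil (i + 1) =
      (1 - lam * ⟪y, ytil i⟫ ^ 2) • ytil i + (lam * ⟪y, ytil i⟫) • y)
    (ha0 : a 0 = a₀)
    (harec : ∀ i : ℕ, a (i + 1) = a i + lam * ‖y‖ ^ 2 * a i * (1 - ‖y‖ ^ 2 * a i ^ 2)) :
    ∀ i : ℕ, ytil i = a i • y ∧ ⟪y, ytil i⟫ = a i * ‖y‖ ^ 2 := by
  intro i
  induction i with
  | zero =>
    constructor
    · rw [hy0, ha0]
    · rw [hy0, ha0, real_inner_smul_right, real_inner_self_eq_norm_sq]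
  | succ n ih =>
    obtain ⟨h1, h2⟩ := ih
    have hy : ytil (n + 1) = a (n + 1) • y := by
      rw [hyrec n, h2, h1, harec n, smul_smul, ← add_smul]
      congr 1
      ring
    refine ⟨hy, ?_⟩
    rw [hy, real_inner_smul_right, real_inner_self_eq_norm_sq]
end

section
/- Let m > 0, let a₀ satisfy 0 < a₀ ≤ m^(−1/2), and let λ > 0 satisfy λ m ≤ 1/2. Define a : ℕ → ℝ by a_{n+1} = a_n + λ m a_n (1 − m a_n²). Then the sequence (a_n) is monotone nondecreasing, satisfies 0 < a_n ≤ m^(−1/2) for all n, and converges to m^(−1/2) as n → ∞. -/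
/-- Convergence of the scalar IterL2Norm iteration `a_{n+1} = a_n + λ m a_n (1 − m a_n²)`
(Eq. (5) of the paper with `m = ‖y‖²`): starting from `0 < a₀ ≤ m^(−1/2)` with update
rate `λ m ≤ 1/2`, the iterates increase monotonically within `(0, m^(−1/2)]` and
converge to the fixed point `a_∞ = m^(−1/2)`. -/
theorem stmt_8 (m lam : ℝ) (hm : 0 < m) (hlam : 0 < lam) (hlm : lam * m ≤ 1 / 2)
    (a : ℕ → ℝ) (ha0 : 0 < a 0) (ha0' : a 0 ≤ m ^ (-(1 : ℝ) / 2))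
    (harec : ∀ n : ℕ, a (n + 1) = a n + lam * m * a n * (1 - m * a n ^ 2)) :
    Monotone a ∧ (∀ n : ℕ, 0 < a n ∧ a n ≤ m ^ (-(1 : ℝ) / 2)) ∧
      Filter.Tendsto a Filter.atTop (nhds (m ^ (-(1 : ℝ) / 2))) := by
  set L : ℝ := m ^ (-(1 : ℝ) / 2) with hLdef
  have hL0 : 0 < L := Real.rpow_pos_of_pos hm _
  have hmL2 : m * L ^ 2 = 1 := by
    have : L ^ 2 = m ^ ((-(1 : ℝ) / 2) * 2) := by
      rw [hLdef, ← Real.rpow_natCast (m ^ (-(1:ℝ)/2)) 2, ← Real.rpow_mul hm.le]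
      norm_num
    rw [this]
    norm_num
    rw [Real.rpow_neg_one]
    field_simp
  have hkey : lam * m ^ 2 * L ^ 2 = lam * m := by
    rw [show lam * m ^ 2 * L ^ 2 = lam * m * (m * L ^ 2) by ring, hmL2, mul_one]
  -- invariant
  have hinv : ∀ n, 0 < a n ∧ a n ≤ L := by
    intro n
    induction n with
    | zero => exact ⟨ha0, ha0'⟩
    | succ k ih =>
      obtain ⟨hp, hle⟩ := ih
      have h1 : 1 - m * a k ^ 2 ≥ 0 := by
        nlinarith [mul_nonneg (mul_nonneg hm.le (sub_nonneg.mpr hle))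
          (by linarith : (0:ℝ) ≤ L + a k)]
      have hbound : lam * m ^ 2 * a k * (L + a k) ≤ 1 := by
        nlinarith [mul_nonneg (mul_nonneg (mul_nonneg hlam.le (mul_pos hm hm).le)
            (sub_nonneg.mpr hle)) (by linarith : (0:ℝ) ≤ L + a k),
          mul_nonneg (mul_nonneg (mul_nonneg hlam.le (mul_pos hm hm).le) hL0.le)
            (sub_nonneg.mpr hle)]
      constructor
      · rw [harec k]
        nlinarith [mul_nonneg (mul_nonneg (mul_nonneg hlam.le hm.le) hp.le) h1]
      · rw [harec k]
        nlinarith [mul_nonneg (sub_nonneg.mpr hle) (sub_nonneg.mpr hbound)]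
  have hmono : Monotone a := by
    apply monotone_nat_of_le_succ
    intro n
    obtain ⟨hp, hle⟩ := hinv n
    have h1 : 1 - m * a n ^ 2 ≥ 0 := by
      nlinarith [mul_nonneg (mul_nonneg hm.le (sub_nonneg.mpr hle))
        (by linarith : (0:ℝ) ≤ L + a n)]
    rw [harec n]
    nlinarith [mul_nonneg (mul_nonneg (mul_nonneg hlam.le hm.le) hp.le) h1]
  refine ⟨hmono, hinv, ?_⟩
  have hbdd : BddAbove (Set.range a) := ⟨L, by rintro x ⟨n, rfl⟩; exact (hinv n).2⟩
  have htend : Filter.Tendsto a Filter.atTop (nhds (⨆ n, a n)) :=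
    tendsto_atTop_ciSup hmono hbdd
  set c : ℝ := ⨆ n, a n with hc
  have hca : a 0 ≤ c := le_ciSup hbdd 0
  have hcL : c ≤ L := ciSup_le fun n => (hinv n).2
  have htend' : Filter.Tendsto (fun n => a (n + 1)) Filter.atTop (nhds c) :=
    htend.comp (Filter.tendsto_add_atTop_nat 1)
  have htend'' : Filter.Tendsto (fun n => a n + lam * m * a n * (1 - m * a n ^ 2))
      Filter.atTop (nhds (c + lam * m * c * (1 - m * c ^ 2))) :=
    htend.add (((Filter.Tendsto.const_mul _ htend).mul
      ((tendsto_const_nhds).sub (Filter.Tendsto.const_mul _ (htend.pow 2)))))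
  have heq : c + lam * m * c * (1 - m * c ^ 2) = c := by
    apply tendsto_nhds_unique _ htend'
    exact htend''.congr (fun n => (harec n).symm)
  have hc0 : 0 < c := lt_of_lt_of_le ha0 hca
  have h4 : lam * m * c * (1 - m * c ^ 2) = 0 := by linarith
  have h5 : 1 - m * c ^ 2 = 0 := by
    have hpos : 0 < lam * m * c := mul_pos (mul_pos hlam hm) hc0
    rcases mul_eq_zero.mp h4 with h | h
    · exact absurd h hpos.ne'
    · exact h
  have hcL' : c = L := by
    apply le_antisymm hcL
    nlinarith [mul_pos hc0 hL0]
  rwa [hcL'] at htend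
end

section
/- Let m > 0, τ > 0, and a₀ > 0, and define a : ℝ → ℝ by a(t) = a₀ · ((1 − m a₀²) e^(−2 m t/τ) + m a₀²)^(−1/2). Then for every t ≥ 0 the quantity (1 − m a₀²) e^(−2 m t/τ) + m a₀² is strictly positive, a(0) = a₀, and a is differentiable at every t ≥ 0 with τ a′(t) = −m² a(t) (a(t)² − 1/m) = m a(t) (1 − m a(t)²). -/
/-- The closed-form expression (Eq. (9) of the paper)
`a(t) = a₀ ((1 − m a₀²) e^(−2mt/τ) + m a₀²)^(−1/2)` is well defined for `t ≥ 0`,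
matches the initial condition `a(0) = a₀`, and solves the continuous-time scalar
normalization dynamics `τ da/dt = −m² a (a² − 1/m) = m a (1 − m a²)` (Eq. (8)). -/
theorem stmt_9 (m τ a₀ : ℝ) (hm : 0 < m) (hτ : 0 < τ) (ha₀ : 0 < a₀)
    (a : ℝ → ℝ)
    (ha : ∀ t : ℝ, a t = a₀ *
      ((1 - m * a₀ ^ 2) * Real.exp (-2 * m * t / τ) + m * a₀ ^ 2) ^ (-(1 : ℝ) / 2)) :
    (∀ t : ℝ, 0 ≤ t →
      0 < (1 - m * a₀ ^ 2) * Real.exp (-2 * m * t / τ) + m * a₀ ^ 2) ∧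
    a 0 = a₀ ∧
    (∀ t : ℝ, 0 ≤ t → DifferentiableAt ℝ a t ∧
      τ * deriv a t = -m ^ 2 * a t * (a t ^ 2 - 1 / m) ∧
      τ * deriv a t = m * a t * (1 - m * a t ^ 2)) := by
  have hma : 0 < m * a₀ ^ 2 := by positivity
  have hg : ∀ t : ℝ, 0 ≤ t →
      0 < (1 - m * a₀ ^ 2) * Real.exp (-2 * m * t / τ) + m * a₀ ^ 2 := by
    intro t ht
    have hEpos : 0 < Real.exp (-2 * m * t / τ) := Real.exp_pos _
    have hEle : Real.exp (-2 * m * t / τ) ≤ 1 := by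
      apply Real.exp_le_one_iff.mpr
      apply div_nonpos_of_nonpos_of_nonneg
      · nlinarith
      · exact hτ.le
    rcases le_or_gt (m * a₀ ^ 2) 1 with h | h
    · nlinarith
    · nlinarith
  refine ⟨hg, ?_, ?_⟩
  · rw [ha 0]
    norm_num [Real.rpow_natCast]
  intro t ht
  have hp : 0 < (1 - m * a₀ ^ 2) * Real.exp (-2 * m * t / τ) + m * a₀ ^ 2 := hg t ht
  set E : ℝ := Real.exp (-2 * m * t / τ) with hEdef
  set p : ℝ := (1 - m * a₀ ^ 2) * E + m * a₀ ^ 2 with hpdef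
  have hgd : HasDerivAt (fun s => (1 - m * a₀ ^ 2) * Real.exp (-2 * m * s / τ) + m * a₀ ^ 2)
      ((1 - m * a₀ ^ 2) * (E * (-2 * m / τ))) t := by
    have h1 : HasDerivAt (fun s : ℝ => -2 * m * s / τ) (-2 * m / τ) t := by
      simpa using ((hasDerivAt_id t).const_mul (-2 * m)).div_const τ
    exact ((h1.exp).const_mul (1 - m * a₀ ^ 2)).add_const (m * a₀ ^ 2)
  have hrd : HasDerivAt (fun s => a₀ *
        ((1 - m * a₀ ^ 2) * Real.exp (-2 * m * s / τ) + m * a₀ ^ 2) ^ (-(1 : ℝ) / 2))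
      (a₀ * ((1 - m * a₀ ^ 2) * (E * (-2 * m / τ)) * (-(1 : ℝ) / 2) *
        p ^ (-(1 : ℝ) / 2 - 1))) t :=
    (hgd.rpow_const (Or.inl hp.ne')).const_mul a₀
  have haf : a = fun s => a₀ *
      ((1 - m * a₀ ^ 2) * Real.exp (-2 * m * s / τ) + m * a₀ ^ 2) ^ (-(1 : ℝ) / 2) :=
    funext ha
  have hda : DifferentiableAt ℝ a t := by rw [haf]; exact hrd.differentiableAt
  have hderiv : deriv a t = a₀ * ((1 - m * a₀ ^ 2) * (E * (-2 * m / τ)) * (-(1 : ℝ) / 2) *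
      p ^ (-(1 : ℝ) / 2 - 1)) := by rw [haf]; exact hrd.deriv
  set q : ℝ := p ^ (-(1 : ℝ) / 2) with hqdef
  have hat : a t = a₀ * q := ha t
  have hq2 : q ^ 2 = p⁻¹ := by
    rw [hqdef, ← Real.rpow_natCast (p ^ (-(1 : ℝ) / 2)) 2, ← Real.rpow_mul hp.le]
    norm_num
    exact (Real.rpow_neg_one p)
  have hexp : p ^ (-(1 : ℝ) / 2 - 1) = q / p := by
    rw [Real.rpow_sub hp, Real.rpow_one, hqdef]
  have key : τ * deriv a t = m * a t * (1 - m * a t ^ 2) := by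
    rw [hderiv, hexp, hat, mul_pow, hq2]
    have hpe : p = (1 - m * a₀ ^ 2) * E + m * a₀ ^ 2 := hpdef
    field_simp
    linear_combination (2 * m * τ * a₀ * q * p) * hpe
  refine ⟨hda, ?_, key⟩
  rw [key]
  field_simp
  ring
end

section
/- Let m > 0 be written as m = s · 2^E with E ∈ ℤ and 1 ≤ s < 2, and set a₀ := 2^(−(E+1)/2) (a real power of 2) and a_∞ := m^(−1/2). Then a₀/a_∞ = √(s/2), and consequently 0.7 < 1/√2 ≤ a₀/a_∞ < 1. -/
/-- Quality of the exponent-based initialization (Eq. (6) of the paper): if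
`m = s · 2^E` with significand `1 ≤ s < 2` and unbiased exponent `E`, then the
initialization `a₀ = 2^(−(E+1)/2)` satisfies `a₀/a_∞ = √(s/2)` where
`a_∞ = m^(−1/2)`, hence `0.7 < 1/√2 ≤ a₀/a_∞ < 1`. -/
theorem stmt_11 (m s : ℝ) (E : ℤ) (hm : 0 < m) (hs : 1 ≤ s) (hs' : s < 2)
    (hmE : m = s * 2 ^ E)
    (a₀ ainf : ℝ) (ha₀ : a₀ = (2 : ℝ) ^ (-(((E : ℝ) + 1) / 2)))
    (hainf : ainf = m ^ (-(1 : ℝ) / 2)) :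
    a₀ / ainf = Real.sqrt (s / 2) ∧
      (0.7 : ℝ) < 1 / Real.sqrt 2 ∧ 1 / Real.sqrt 2 ≤ a₀ / ainf ∧ a₀ / ainf < 1 := by
  have h2 : (0:ℝ) < 2 := by norm_num
  have hspos : (0:ℝ) < s := by linarith
  have hz : (0:ℝ) < (2:ℝ) ^ E := zpow_pos h2 E
  have key : a₀ / ainf = Real.sqrt (s / 2) := by
    subst ha₀ hainf hmE
    have e1 : (s * (2:ℝ) ^ E) ^ (-(1:ℝ)/2)
        = s ^ (-(1:ℝ)/2) * ((2:ℝ) ^ E) ^ (-(1:ℝ)/2) :=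
      Real.mul_rpow hspos.le hz.le
    have e2 : ((2:ℝ) ^ E) ^ (-(1:ℝ)/2) = (2:ℝ) ^ ((E:ℝ) * (-(1:ℝ)/2)) := by
      rw [← Real.rpow_intCast 2 E, ← Real.rpow_mul h2.le]
    rw [e1, e2]
    have hsr : s ^ (-(1:ℝ)/2) = (Real.sqrt s)⁻¹ := by
      rw [Real.rpow_def_of_pos hspos, Real.sqrt_eq_rpow, Real.rpow_def_of_pos hspos,
        ← Real.exp_neg]
      ring_nf
    have h2r : (2:ℝ) ^ (-(((E:ℝ) + 1) / 2)) / (2:ℝ) ^ ((E:ℝ) * (-(1:ℝ)/2))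
        = (2:ℝ) ^ (-(1:ℝ)/2) := by
      rw [← Real.rpow_sub h2]
      ring_nf
    have h2r' : (2:ℝ) ^ (-(1:ℝ)/2) = (Real.sqrt 2)⁻¹ := by
      rw [Real.rpow_def_of_pos h2, Real.sqrt_eq_rpow, Real.rpow_def_of_pos h2,
        ← Real.exp_neg]
      ring_nf
    rw [div_mul_eq_div_div_swap, h2r, h2r', hsr,
      show s / 2 = s * 2⁻¹ by ring, Real.sqrt_mul hspos.le, Real.sqrt_inv]
    field_simp
  have hsq2 : Real.sqrt 2 > 0 := Real.sqrt_pos.mpr h2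
  have hsq2' : Real.sqrt 2 ^ 2 = 2 := Real.sq_sqrt h2.le
  refine ⟨key, ?_, ?_, ?_⟩
  · rw [lt_div_iff₀ hsq2]
    nlinarith [hsq2']
  · rw [key]
    have : (1:ℝ) / Real.sqrt 2 = Real.sqrt (1/2) := by
      rw [one_div, one_div, Real.sqrt_inv]
    rw [this]
    exact Real.sqrt_le_sqrt (by linarith)
  · rw [key]
    have : s / 2 < 1 := by linarith
    calc Real.sqrt (s/2) < Real.sqrt 1 := Real.sqrt_lt_sqrt (by positivity) (by linarith)
      _ = 1 := Real.sqrt_one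
end
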